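/- arXiv:0806.1503 — 2 statements merged into one kernel-verified Lean document; each statement's English description precedes it below -/
import Mathlib

section
/- Define T(n,k) for integers n ≥ 0, 0 ≤ k ≤ n by T(n,0) = T(n,n) = 1 and T(n,k) = 2·T(n-1,k-1) + T(n-1,k) for 0 < k < n. Then for all 0 ≤ k ≤ n, T(n,k) = ∑_{i=n-k}^{n} C(n,i)·C(i-1, n-k-1), where C(-1,-1) is interpreted as 1. -/
/-!
Both sides take the value 1 at `k = 0` and `k = n`, so it suffices that the sum
`S(n, m) = ∑_{i=m}^{n} C(n,i) C(i-1,m-1)`, with `m = n - k`, obeys the recurrence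
`S(n, m) = 2 S(n-1, m) + S(n-1, m-1)`. Pascal's rule on `C(n,i)` splits `S(n, m)` into
two sums; the first is `S(n-1, m)`, and in the second, after shifting `i`, Pascal's rule
on `C(i, m-1)` produces `S(n-1, m-1) + S(n-1, m)`.
-/

/-- Sloane's A119258: `T n 0 = T n n = 1` and `T n k = 2 T (n-1) (k-1) + T (n-1) k`
for `0 < k < n`, with `T n k = 0` for `k > n`. -/
def T : ℕ → ℕ → ℤ
  | _, 0 => 1
  | 0, _ + 1 => 0
  | n + 1, k + 1 =>
    if n + 1 ≤ k + 1 then (if k + 1 = n + 1 then 1 else 0)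
    else 2 * T n k + T n (k + 1)

/-- Integer binomial coefficient `C a b`, zero for `b < 0` or `b > a`, with the
additional convention `C (-1) (-1) = 1`. -/
def ibc (a b : ℤ) : ℤ :=
  if a = -1 ∧ b = -1 then 1
  else if 0 ≤ b ∧ b ≤ a then (a.toNat).choose b.toNat else 0

open Finset

lemma ibc_natCast (p q : ℕ) : ibc p q = p.choose q := by
  rcases le_or_gt q p with h | h
  · simp [ibc, h]
  · simp [ibc, Nat.choose_eq_zero_of_lt h]

lemma ibc_of_lt (a b : ℤ) (hb : 0 ≤ b) (h : a < b) : ibc a b = 0 := by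
  unfold ibc; split_ifs <;> omega

lemma ibc_of_neg (a b : ℤ) (ha : 0 ≤ a) (hb : b < 0) : ibc a b = 0 := by
  unfold ibc; split_ifs <;> omega

lemma ibc_zero_right (a : ℤ) (ha : 0 ≤ a) : ibc a 0 = 1 := by
  lift a to ℕ using ha; simpa using ibc_natCast a 0

lemma ibc_self (a : ℤ) (ha : 0 ≤ a) : ibc a a = 1 := by
  lift a to ℕ using ha; simp [ibc_natCast]

/-- At `(a, b) = (0, 0)` this is `1 = C(-1,-1) + 0`: it is where the convention `C(-1,-1) = 1`
is needed. -/
lemma ibc_pascal (a b : ℤ) (ha : 0 ≤ a) (hb : 0 ≤ b) :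
    ibc a b = ibc (a - 1) (b - 1) + ibc (a - 1) b := by
  rcases hb.eq_or_lt with rfl | hb
  · rcases ha.eq_or_lt with rfl | ha
    · simp [ibc]
    · rw [ibc_zero_right a ha.le, ibc_of_neg _ _ (by omega) (by omega), ibc_zero_right _ (by omega),
        zero_add]
  rcases ha.eq_or_lt with rfl | ha
  · rw [ibc_of_lt 0 b hb.le hb, ibc_of_lt _ _ (by omega) (by omega), ibc_of_lt _ b hb.le (by omega),
      add_zero]
  obtain ⟨p, rfl⟩ : ∃ p : ℕ, a = p + 1 := ⟨(a - 1).toNat, by omega⟩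
  obtain ⟨q, rfl⟩ : ∃ q : ℕ, b = q + 1 := ⟨(b - 1).toNat, by omega⟩
  rw [add_sub_cancel_right, add_sub_cancel_right]
  simp only [← Nat.cast_add_one, ibc_natCast]
  exact_mod_cast Nat.choose_succ_succ p q

noncomputable def binomSum (n m : ℤ) : ℤ := ∑ i ∈ Icc m n, ibc n i * ibc (i - 1) (m - 1)

lemma binomSum_self (n : ℤ) (hn : 0 ≤ n) : binomSum n n = 1 := by
  rw [binomSum, Icc_self, sum_singleton, ibc_self n hn]
  rcases hn.eq_or_lt with rfl | hn
  · rfl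
  · rw [ibc_self _ (by omega), one_mul]

lemma binomSum_zero_right (n : ℤ) (hn : 0 ≤ n) : binomSum n 0 = 1 := by
  rw [binomSum, ← insert_Icc_add_one_left_eq_Icc hn, sum_insert (by simp), zero_sub,
    ibc_zero_right n hn, sum_eq_zero fun i hi => ?_]
  · rfl
  · rw [ibc_of_neg (i - 1) (-1) (by simp at hi; omega) (by omega), mul_zero]

lemma sum_Icc_eq_sum_Icc_sub_one_of_eq_zero {M : Type*} [AddCommMonoid M] (f : ℤ → M) {m n : ℤ}
    (hmn : m ≤ n) (hf : f n = 0) : ∑ i ∈ Icc m n, f i = ∑ i ∈ Icc m (n - 1), f i := by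
  rw [← insert_Icc_sub_one_right_eq_Icc hmn, sum_insert (by simp), hf, zero_add]

lemma sum_Icc_sub_one_eq_sum_Icc_of_eq_zero {M : Type*} [AddCommMonoid M] (f : ℤ → M) {m n : ℤ}
    (hmn : m - 1 ≤ n) (hf : f (m - 1) = 0) : ∑ i ∈ Icc (m - 1) n, f i = ∑ i ∈ Icc m n, f i := by
  rw [← insert_Icc_add_one_left_eq_Icc hmn, sum_insert (by simp), hf, zero_add, sub_add_cancel]

lemma binomSum_rec (n m : ℤ) (hm : 1 ≤ m) (hmn : m < n) :
    binomSum n m = 2 * binomSum (n - 1) m + binomSum (n - 1) (m - 1) := by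
  have shift : ∑ i ∈ Icc m n, ibc (n - 1) (i - 1) * ibc (i - 1) (m - 1) =
      ∑ i ∈ Icc (m - 1) (n - 1), ibc (n - 1) i * ibc i (m - 1) := by
    have : Icc m n = (Icc (m - 1) (n - 1)).image (· + 1) := by
      rw [image_add_right_Icc, sub_add_cancel, sub_add_cancel]
    rw [this, sum_image fun _ _ _ _ => add_right_cancel]
    simp
  have drop_top : ∑ i ∈ Icc m n, ibc (n - 1) i * ibc (i - 1) (m - 1) = binomSum (n - 1) m :=
    sum_Icc_eq_sum_Icc_sub_one_of_eq_zero _ hmn.le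
      (by rw [ibc_of_lt (n - 1) n (by omega) (by omega), zero_mul])
  have drop_bottom : ∑ i ∈ Icc (m - 1) (n - 1), ibc (n - 1) i * ibc (i - 1) (m - 1) =
      binomSum (n - 1) m :=
    sum_Icc_sub_one_eq_sum_Icc_of_eq_zero _ (by omega)
      (by rw [ibc_of_lt (m - 1 - 1) (m - 1) (by omega) (by omega), mul_zero])
  calc binomSum n m
      = ∑ i ∈ Icc m n, ibc (n - 1) i * ibc (i - 1) (m - 1)
        + ∑ i ∈ Icc m n, ibc (n - 1) (i - 1) * ibc (i - 1) (m - 1) := by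
        rw [binomSum, ← sum_add_distrib]
        refine sum_congr rfl fun i hi => ?_
        rw [mem_Icc] at hi
        rw [ibc_pascal n i (by omega) (by omega)]
        ring
    _ = binomSum (n - 1) m + ∑ i ∈ Icc (m - 1) (n - 1),
          (ibc (n - 1) i * ibc (i - 1) (m - 1 - 1) + ibc (n - 1) i * ibc (i - 1) (m - 1)) := by
        rw [drop_top, shift]
        refine congrArg _ (sum_congr rfl fun i hi => ?_)
        rw [mem_Icc] at hi
        rw [ibc_pascal i (m - 1) (by omega) (by omega)]
        ring
    _ = 2 * binomSum (n - 1) m + binomSum (n - 1) (m - 1) := by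
        rw [sum_add_distrib, drop_bottom]
        unfold binomSum
        ring

lemma T_zero_right (n : ℕ) : T n 0 = 1 := by
  cases n <;> rfl

lemma T_self (n : ℕ) : T n n = 1 := by
  cases n <;> simp [T]

lemma T_succ_succ {n j : ℕ} (h : j < n) : T (n + 1) (j + 1) = 2 * T n j + T n (j + 1) := by
  simp [T, show ¬n ≤ j by omega]

theorem stmt1 (n k : ℕ) (h : k ≤ n) :
    T n k = ∑ i ∈ Finset.Icc ((n : ℤ) - k) (n : ℤ), ibc n i * ibc (i - 1) ((n : ℤ) - k - 1) := by
  change T n k = binomSum n (n - k)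
  induction n generalizing k with
  | zero =>
    obtain rfl : k = 0 := by omega
    exact (binomSum_self 0 le_rfl).symm
  | succ n ih =>
    rcases k with _ | j
    · rw [T_zero_right, Nat.cast_zero, sub_zero, binomSum_self _ (by positivity)]
    rcases (Nat.le_of_lt_succ h).lt_or_eq with hj | rfl
    · have hm : ((n + 1 : ℕ) : ℤ) - (j + 1 : ℕ) = n - j := by push_cast; ring
      rw [T_succ_succ hj, ih j hj.le, ih (j + 1) hj, hm,
        binomSum_rec ((n + 1 : ℕ) : ℤ) (n - j) (by omega) (by omega)]
      push_cast
      ring_nf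
    · rw [T_self, sub_self, binomSum_zero_right _ (by positivity)]
end

section
/- For n ≥ 4 and 3 ≤ k < n, the number of subsets of Ψ⁺_n of the form L(v,S) with |S| = k equals 2^{n-k}·C(n,k), and the number of subsets of the form K(v',S) with v' ∈ Ψ⁻_n and |S| = k+1 equals 2^{n-1}·C(n,k+1). -/
/-- The vertex set of the hypercube: vectors with all coordinates `±1`. -/
def PsiSet (n : ℕ) : Set (Fin n → ℤ) := {v | ∀ i, v i = 1 ∨ v i = -1}

/-- The number of coordinates equal to `-1`. -/
def negCount {n : ℕ} (v : Fin n → ℤ) : ℕ := (Finset.univ.filter fun i => v i = -1).card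

/-- `Ψ⁺ₙ`: `±1`-vectors with an even number of `-1` coordinates. -/
def PsiPlus (n : ℕ) : Set (Fin n → ℤ) := {v | v ∈ PsiSet n ∧ Even (negCount v)}

/-- `Ψ⁻ₙ`: `±1`-vectors with an odd number of `-1` coordinates. -/
def PsiMinus (n : ℕ) : Set (Fin n → ℤ) := {v | v ∈ PsiSet n ∧ ¬ Even (negCount v)}

/-- Hamming distance: the number of coordinates at which `x` and `y` differ. -/
def hamming {n : ℕ} (x y : Fin n → ℤ) : ℕ := (Finset.univ.filter fun i => x i ≠ y i).card

/-- `K(v', S)`: the set of vertices of `Ψ⁺ₙ` differing from `v'` in exactly one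
coordinate, that coordinate lying in `S`. -/
def Kset {n : ℕ} (v' : Fin n → ℤ) (S : Finset (Fin n)) : Set (Fin n → ℤ) :=
  {w | w ∈ PsiPlus n ∧ ∃ i ∈ S, w i ≠ v' i ∧ ∀ j, j ≠ i → w j = v' j}

/-- `L(v, S)`: the set of vertices of `Ψ⁺ₙ` agreeing with `v` at all coordinates
outside `S`. -/
def Lset {n : ℕ} (v : Fin n → ℤ) (S : Finset (Fin n)) : Set (Fin n → ℤ) :=
  {w | w ∈ PsiPlus n ∧ ∀ i, i ∉ S → w i = v i}

/-!
Both families are parametrised injectively. Since only the values of `v` off `S` matter,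
`Lset v S` is determined by `S` together with a sign vector that is `1` on `S`, giving
`C(n,k) · 2^(n-k)` parameters; for `|S| ≥ 2` both are recovered, `S` as the set of coordinates
on which two members of `Lset v S` differ. For `v' ∈ Ψ⁻ₙ`, `Kset v' S` is the set of the
neighbours of `v'` in the directions of `S`, which recovers `v'` as soon as `|S| ≥ 3`, and
`|Ψ⁻ₙ| = 2^(n-1)` because negating one coordinate swaps `Ψ⁺ₙ` and `Ψ⁻ₙ`.
-/

namespace HalfCube

open Finset

variable {n : ℕ}

def signVectorsOneOn (S : Finset (Fin n)) : Finset (Fin n → ℤ) :=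
  Fintype.piFinset fun i => if i ∈ S then {1} else {1, -1}

lemma mem_signVectorsOneOn {S : Finset (Fin n)} {v : Fin n → ℤ} :
    v ∈ signVectorsOneOn S ↔ v ∈ PsiSet n ∧ ∀ i ∈ S, v i = 1 := by
  simp only [signVectorsOneOn, Fintype.mem_piFinset, PsiSet, Set.mem_ofPred_eq]
  refine ⟨fun h => ⟨fun i => ?_, fun i hi => ?_⟩, fun ⟨hv, h1⟩ i => ?_⟩
  · specialize h i; split_ifs at h <;> simp_all
  · simpa [hi] using h i
  · split_ifs with hi <;> simp [h1, hi, hv i]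

lemma card_signVectorsOneOn (S : Finset (Fin n)) : #(signVectorsOneOn S) = 2 ^ (n - #S) := by
  simp only [signVectorsOneOn, Fintype.card_piFinset, apply_ite card, card_singleton,
    prod_ite, prod_const_one, prod_const, one_mul, filter_not, filter_mem_eq_inter,
    univ_inter, card_sdiff_of_subset (subset_univ S), card_univ, Fintype.card_fin]
  rw [card_pair (by decide)]

lemma coe_signVectorsOneOn_empty :
    (signVectorsOneOn (∅ : Finset (Fin n)) : Set (Fin n → ℤ)) = PsiSet n := by
  ext v; simp [mem_signVectorsOneOn]

lemma PsiSet_finite : (PsiSet n).Finite := by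
  rw [← coe_signVectorsOneOn_empty]; exact finite_toSet _

lemma ncard_PsiSet : (PsiSet n).ncard = 2 ^ n := by
  rw [← coe_signVectorsOneOn_empty, Set.ncard_coe_finset, card_signVectorsOneOn, card_empty,
    Nat.sub_zero]

lemma PsiSet.ne_zero {v : Fin n → ℤ} (hv : v ∈ PsiSet n) (i : Fin n) : v i ≠ 0 := by
  rcases hv i with h | h <;> simp [h]

def flip (v : Fin n → ℤ) (i : Fin n) : Fin n → ℤ := Function.update v i (-v i)

@[simp]
lemma flip_apply_self (v : Fin n → ℤ) (i : Fin n) : flip v i i = -v i := by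
  simp [flip]

lemma flip_apply_of_ne (v : Fin n → ℤ) {i j : Fin n} (h : j ≠ i) : flip v i j = v j := by
  simp [flip, Function.update_of_ne h]

lemma flip_flip (v : Fin n → ℤ) (i : Fin n) : flip (flip v i) i = v := by
  simp [flip]

lemma flip_injective {v : Fin n → ℤ} (hv : v ∈ PsiSet n) : Function.Injective (flip v) := by
  intro i j h
  by_contra hij
  have hi := congrFun h i
  rw [flip_apply_self, flip_apply_of_ne _ hij] at hi
  exact PsiSet.ne_zero hv i (by omega)

lemma flip_mem_PsiSet {v : Fin n → ℤ} (hv : v ∈ PsiSet n) (i : Fin n) :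
    flip v i ∈ PsiSet n := by
  intro j
  rcases eq_or_ne j i with rfl | hj
  · rcases hv j with h | h <;> simp [h]
  · rw [flip_apply_of_ne _ hj]; exact hv j

lemma negCount_eq_card_erase_add (v : Fin n → ℤ) (i : Fin n) :
    negCount v = #((univ.erase i).filter fun j => v j = -1) + if v i = -1 then 1 else 0 := by
  rw [negCount, ← insert_erase (mem_univ i), filter_insert]
  split_ifs <;> simp [card_insert_of_notMem]

lemma even_negCount_flip_iff {v : Fin n → ℤ} (hv : v ∈ PsiSet n) (i : Fin n) :
    Even (negCount (flip v i)) ↔ ¬Even (negCount v) := by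
  have hrest : ((univ.erase i).filter fun j => flip v i j = -1)
      = (univ.erase i).filter fun j => v j = -1 :=
    filter_congr fun j hj => by rw [flip_apply_of_ne _ (ne_of_mem_erase hj)]
  rw [negCount_eq_card_erase_add (flip v i) i, negCount_eq_card_erase_add v i, hrest,
    flip_apply_self]
  rcases hv i with h | h <;> simp [h, Nat.even_add_one]

lemma flip_mem_PsiPlus_iff {v : Fin n → ℤ} (hv : v ∈ PsiSet n) (i : Fin n) :
    flip v i ∈ PsiPlus n ↔ v ∈ PsiMinus n := by
  simp [PsiPlus, PsiMinus, hv, flip_mem_PsiSet hv, even_negCount_flip_iff hv]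

lemma PsiSet_eq_union : PsiSet n = PsiPlus n ∪ PsiMinus n := by
  ext v
  by_cases h : Even (negCount v) <;> simp only [PsiPlus, PsiMinus, Set.mem_union,
    Set.mem_ofPred_eq, h, and_true, and_false, or_false, false_or, not_true, not_false_eq_true]

lemma ncard_PsiMinus (hn : 0 < n) : (PsiMinus n).ncard = 2 ^ (n - 1) := by
  let i₀ : Fin n := ⟨0, hn⟩
  have hflip : (flip · i₀) '' PsiMinus n = PsiPlus n := by
    ext w
    refine ⟨?_, fun hw => ⟨flip w i₀, ?_, flip_flip w i₀⟩⟩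
    · rintro ⟨v, hv, rfl⟩; exact (flip_mem_PsiPlus_iff hv.1 i₀).2 hv
    · rw [← flip_mem_PsiPlus_iff (flip_mem_PsiSet hw.1 i₀), flip_flip]; exact hw
  have hinj : Function.Injective (flip · i₀) :=
    Function.LeftInverse.injective (g := (flip · i₀)) fun v => flip_flip v i₀
  have hdisj : Disjoint (PsiPlus n) (PsiMinus n) :=
    Set.disjoint_left.2 fun v hp hm => hm.2 hp.2
  have hsum := Set.ncard_union_eq hdisj (PsiSet_finite.subset fun v hv => hv.1)
    (PsiSet_finite.subset fun v hv => hv.1)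
  rw [← PsiSet_eq_union, ncard_PsiSet, ← hflip, Set.ncard_image_of_injective _ hinj] at hsum
  rw [← Nat.two_pow_pred_add_two_pow_pred hn] at hsum
  omega

lemma ncard_setOf_card_eq (m : ℕ) : {S : Finset (Fin n) | #S = m}.ncard = n.choose m := by
  have : {S : Finset (Fin n) | #S = m} = ↑(powersetCard m (univ : Finset (Fin n))) := by
    ext; simp
  rw [this, Set.ncard_coe_finset, card_powersetCard, card_univ, Fintype.card_fin]

lemma Lset_congr {v u : Fin n → ℤ} {S : Finset (Fin n)} (h : ∀ i ∉ S, v i = u i) :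
    Lset v S = Lset u S := by
  ext w
  exact and_congr_right fun _ => forall₂_congr fun i hi => by rw [h i hi]

lemma Lset_nonempty {v : Fin n → ℤ} (hv : v ∈ PsiSet n) {S : Finset (Fin n)}
    (hS : S.Nonempty) : (Lset v S).Nonempty := by
  obtain ⟨i, hi⟩ := hS
  by_cases heven : Even (negCount v)
  · exact ⟨v, ⟨hv, heven⟩, fun _ _ => rfl⟩
  · exact ⟨flip v i, (flip_mem_PsiPlus_iff hv i).2 ⟨hv, heven⟩,
      fun j hj => flip_apply_of_ne _ (ne_of_mem_of_not_mem hi hj).symm⟩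

lemma exists_mem_Lset_apply_ne {v : Fin n → ℤ} (hv : v ∈ PsiSet n) {S : Finset (Fin n)}
    (hS : 1 < #S) {i : Fin n} (hi : i ∈ S) :
    ∃ w₁ ∈ Lset v S, ∃ w₂ ∈ Lset v S, w₁ i ≠ w₂ i := by
  obtain ⟨w, hw⟩ := Lset_nonempty hv ⟨i, hi⟩
  obtain ⟨j, hj, hji⟩ := exists_mem_ne hS i
  have hwi : flip w i ∈ PsiSet n := flip_mem_PsiSet hw.1.1 i
  refine ⟨flip (flip w i) j, ⟨?_, fun l hl => ?_⟩, w, hw, ?_⟩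
  · rw [flip_mem_PsiPlus_iff hwi, PsiMinus, Set.mem_ofPred_eq, even_negCount_flip_iff hw.1.1,
      not_not]
    exact ⟨hwi, hw.1.2⟩
  · rw [flip_apply_of_ne _ (ne_of_mem_of_not_mem hj hl).symm,
      flip_apply_of_ne _ (ne_of_mem_of_not_mem hi hl).symm]
    exact hw.2 l hl
  · rw [flip_apply_of_ne _ hji.symm, flip_apply_self]
    exact fun h => PsiSet.ne_zero hw.1.1 i (by omega)

lemma subset_of_Lset_eq {v u : Fin n → ℤ} (hv : v ∈ PsiSet n) {S T : Finset (Fin n)}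
    (hS : 1 < #S) (h : Lset v S = Lset u T) : S ⊆ T := by
  intro i hi
  by_contra hiT
  obtain ⟨w₁, hw₁, w₂, hw₂, hne⟩ := exists_mem_Lset_apply_ne hv hS hi
  rw [h] at hw₁ hw₂
  exact hne ((hw₁.2 i hiT).trans (hw₂.2 i hiT).symm)

lemma Lset_injOn :
    Set.InjOn (fun p : (_ : Finset (Fin n)) × (Fin n → ℤ) => Lset p.2 p.1)
      {p | 1 < #p.1 ∧ p.2 ∈ signVectorsOneOn p.1} := by
  rintro ⟨S, v⟩ ⟨hS, hv⟩ ⟨T, u⟩ ⟨hT, hu⟩ (h : Lset v S = Lset u T)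
  dsimp only at hS hT hv hu
  rw [mem_signVectorsOneOn] at hv hu
  obtain rfl : S = T :=
    (subset_of_Lset_eq hv.1 hS h).antisymm (subset_of_Lset_eq hu.1 hT h.symm)
  obtain ⟨w, hw⟩ := Lset_nonempty hv.1 (card_pos.1 (by omega : 0 < #S))
  have hw' : w ∈ Lset u S := h ▸ hw
  congr 1
  funext i
  by_cases hi : i ∈ S
  · rw [hv.2 i hi, hu.2 i hi]
  · rw [← hw.2 i hi, hw'.2 i hi]

lemma setOf_Lset_eq_image {k : ℕ} (hk : 0 < k) :
    {X : Set (Fin n → ℤ) | ∃ v ∈ PsiPlus n, ∃ S : Finset (Fin n), #S = k ∧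
      X = Lset v S} =
      (fun p : (_ : Finset (Fin n)) × (Fin n → ℤ) => Lset p.2 p.1) ''
        ↑((powersetCard k (univ : Finset (Fin n))).sigma signVectorsOneOn) := by
  ext X
  simp only [Set.mem_ofPred_eq, Set.mem_image, mem_coe, mem_sigma, mem_powersetCard,
    subset_univ, true_and, mem_signVectorsOneOn, Sigma.exists]
  constructor
  · rintro ⟨v, hv, S, hS, rfl⟩
    refine ⟨S, fun i => if i ∈ S then 1 else v i, ⟨hS, fun i => ?_, fun i hi => if_pos hi⟩,
      Lset_congr fun i hi => if_neg hi⟩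
    dsimp only
    split_ifs
    · exact Or.inl rfl
    · exact hv.1 i
  · rintro ⟨S, v, ⟨hS, hv, -⟩, rfl⟩
    obtain ⟨w, hw⟩ := Lset_nonempty hv (card_pos.1 (by omega : 0 < #S))
    exact ⟨w, hw.1, S, hS, Lset_congr fun i hi => (hw.2 i hi).symm⟩

lemma ncard_setOf_Lset {k : ℕ} (hk : 2 ≤ k) :
    {X : Set (Fin n → ℤ) | ∃ v ∈ PsiPlus n, ∃ S : Finset (Fin n), #S = k ∧
      X = Lset v S}.ncard = 2 ^ (n - k) * n.choose k := by
  rw [setOf_Lset_eq_image (by omega), Set.InjOn.ncard_image, Set.ncard_coe_finset, card_sigma,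
    sum_congr rfl fun S hS => by rw [card_signVectorsOneOn, (mem_powersetCard.1 hS).2],
    sum_const, card_powersetCard, card_univ, Fintype.card_fin, smul_eq_mul, mul_comm]
  refine Lset_injOn.mono fun p hp => ?_
  obtain ⟨hS, hv⟩ := mem_sigma.1 hp
  exact ⟨by rw [(mem_powersetCard.1 hS).2]; omega, hv⟩

lemma Kset_eq_image {v : Fin n → ℤ} (hv : v ∈ PsiMinus n) (S : Finset (Fin n)) :
    Kset v S = flip v '' S := by
  ext w
  constructor
  · rintro ⟨hw, i, hi, hne, hagree⟩
    refine ⟨i, hi, funext fun j => ?_⟩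
    rcases eq_or_ne j i with rfl | hj
    · rw [flip_apply_self]
      rcases hv.1 j with h | h <;> rcases hw.1 j with h' | h' <;> omega
    · rw [flip_apply_of_ne _ hj, hagree j hj]
  · rintro ⟨i, hi, rfl⟩
    refine ⟨(flip_mem_PsiPlus_iff hv.1 i).2 hv, i, hi, ?_, fun j hj => flip_apply_of_ne _ hj⟩
    rw [flip_apply_self]
    exact fun h => PsiSet.ne_zero hv.1 i (by omega)

/-- At a coordinate `j` where `v` and `u` differ, every neighbour `flip v i` with `i ≠ j` must be
`flip u j`, and two of them cannot coincide. -/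
lemma eq_of_flip_image_subset {v u : Fin n → ℤ} (hv : v ∈ PsiSet n) {S : Finset (Fin n)}
    {T : Set (Fin n)} (hS : 2 < #S) (h : flip v '' S ⊆ flip u '' T) : v = u := by
  funext j
  by_contra hj
  have key : ∀ i ∈ S, i ≠ j → flip v i = flip u j := by
    intro i hi hij
    obtain ⟨l, -, hl⟩ := h ⟨i, hi, rfl⟩
    obtain rfl : l = j := by
      by_contra hlj
      have := congrFun hl j
      rw [flip_apply_of_ne _ (Ne.symm hlj), flip_apply_of_ne _ (Ne.symm hij)] at this
      exact hj this.symm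
    exact hl.symm
  obtain ⟨i₁, hi₁, i₂, hi₂, hne⟩ := one_lt_card.1 (by
    have := pred_card_le_card_erase (a := j) (s := S); omega : 1 < #(S.erase j))
  exact hne (flip_injective hv ((key i₁ (mem_of_mem_erase hi₁) (ne_of_mem_erase hi₁)).trans
    (key i₂ (mem_of_mem_erase hi₂) (ne_of_mem_erase hi₂)).symm))

lemma Kset_injOn :
    Set.InjOn (fun p : (Fin n → ℤ) × Finset (Fin n) => Kset p.1 p.2)
      (PsiMinus n ×ˢ {S | 2 < #S}) := by
  rintro ⟨v, S⟩ ⟨hv, hS⟩ ⟨u, T⟩ ⟨hu, hT⟩ h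
  dsimp only at hv hS hu hT h
  rw [Kset_eq_image hv, Kset_eq_image hu] at h
  obtain rfl : v = u := eq_of_flip_image_subset hv.1 hS h.subset
  rw [(Set.image_injective.2 (flip_injective hv.1)).eq_iff, coe_inj] at h
  rw [h]

lemma ncard_setOf_Kset {k : ℕ} (hk : 2 ≤ k) :
    {X : Set (Fin n → ℤ) | ∃ v' ∈ PsiMinus n, ∃ S : Finset (Fin n), #S = k + 1 ∧
      X = Kset v' S}.ncard = 2 ^ (n - 1) * n.choose (k + 1) := by
  have himage : {X : Set (Fin n → ℤ) | ∃ v' ∈ PsiMinus n, ∃ S : Finset (Fin n),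
      #S = k + 1 ∧ X = Kset v' S} =
        (fun p => Kset p.1 p.2) '' (PsiMinus n ×ˢ {S | #S = k + 1}) := by
    ext X
    simp only [Set.mem_ofPred_eq, Set.mem_image, Set.mem_prod, Prod.exists]
    exact ⟨fun ⟨v, hv, S, hS, hX⟩ => ⟨v, S, ⟨hv, hS⟩, hX.symm⟩,
      fun ⟨v, S, ⟨hv, hS⟩, hX⟩ => ⟨v, hv, S, hS, hX.symm⟩⟩
  rw [himage, Set.InjOn.ncard_image (Kset_injOn.mono (Set.prod_mono le_rfl fun S hS => by
    simp only [Set.mem_ofPred_eq] at hS ⊢; omega)), Set.ncard_prod, ncard_setOf_card_eq]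
  rcases Nat.eq_zero_or_pos n with rfl | hn
  · simp
  · rw [ncard_PsiMinus hn]

end HalfCube

theorem stmt15_general (n k : ℕ) (h3 : 3 ≤ k) :
    {X : Set (Fin n → ℤ) | ∃ v ∈ PsiPlus n, ∃ S : Finset (Fin n),
        S.card = k ∧ X = Lset v S}.ncard = 2 ^ (n - k) * n.choose k ∧
    {X : Set (Fin n → ℤ) | ∃ v' ∈ PsiMinus n, ∃ S : Finset (Fin n),
        S.card = k + 1 ∧ X = Kset v' S}.ncard = 2 ^ (n - 1) * n.choose (k + 1) :=
  ⟨HalfCube.ncard_setOf_Lset (by omega), HalfCube.ncard_setOf_Kset (by omega)⟩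

theorem stmt15 (n k : ℕ) (hn : 4 ≤ n) (h3 : 3 ≤ k) (hkn : k < n) :
    {X : Set (Fin n → ℤ) | ∃ v ∈ PsiPlus n, ∃ S : Finset (Fin n),
        S.card = k ∧ X = Lset v S}.ncard = 2 ^ (n - k) * n.choose k ∧
    {X : Set (Fin n → ℤ) | ∃ v' ∈ PsiMinus n, ∃ S : Finset (Fin n),
        S.card = k + 1 ∧ X = Kset v' S}.ncard = 2 ^ (n - 1) * n.choose (k + 1) :=
  stmt15_general n k h3
end
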